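/- Let p be an odd prime. The group C_{p^2} × C_{p^2} is capable (it is isomorphic to Q/Z(Q) for some group Q) but not η-capable (there is no finite p-group P with P/η(P) ≅ C_{p^2} × C_{p^2}). -/

import Mathlib

/-- The subgroup generated by `p`-th powers of elements of `N`. -/
def pPow {G : Type*} [Group G] (p : ℕ) (N : Subgroup G) : Subgroup G :=
  Subgroup.closure ((fun x => x ^ p) '' (N : Set G))

theorem pPow_normal {G : Type*} [Group G] (p : ℕ) {N : Subgroup G} (hN : N.Normal) :
    (pPow p N).Normal := by
  constructor
  intro x hx g
  have h : pPow p N ≤ Subgroup.comap (MulAut.conj g).toMonoidHom (pPow p N) := by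
    rw [pPow, Subgroup.closure_le]
    rintro - ⟨n, hn, rfl⟩
    have : (MulAut.conj g) (n ^ p) = (g * n * g⁻¹) ^ p := by
      simp [MulAut.conj_apply, conj_pow]
    refine Subgroup.mem_comap.2 ?_
    show (MulAut.conj g) (n ^ p) ∈ _
    rw [this]
    exact Subgroup.subset_closure ⟨g * n * g⁻¹, hN.conj_mem n hn g, rfl⟩
  simpa using h hx

theorem normal_sSup {G : Type*} [Group G] {S : Set (Subgroup G)}
    (hS : ∀ N ∈ S, N.Normal) : (sSup S).Normal := by
  constructor
  intro x hx g
  have h : sSup S ≤ Subgroup.comap (MulAut.conj g).toMonoidHom (sSup S) := by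
    refine sSup_le fun N hN => le_trans ?_ (Subgroup.comap_mono (le_sSup hN))
    intro n hn
    exact Subgroup.mem_comap.2 (by simpa using (hS N hN).conj_mem n hn g)
  simpa using h hx

/-- The upper η-series: `η₀ = 1`, and `η_{i+1}/η_i = η(G/η_i)` is the product of all
powerfully embedded subgroups of `G/η_i`. -/
def etaUp (p : ℕ) (G : Type*) [Group G] : ℕ → Subgroup G
  | 0 => ⊥
  | i + 1 => sSup {N : Subgroup G | N.Normal ∧ ⁅N, (⊤ : Subgroup G)⁆ ≤ pPow p N ⊔ etaUp p G i}

instance etaUp_normal (p : ℕ) (G : Type*) [Group G] (i : ℕ) : (etaUp p G i).Normal := by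
  cases i with
  | zero => show (⊥ : Subgroup G).Normal; infer_instance
  | succ i => exact normal_sSup fun N hN => hN.1

/-- The powerful class of `G`. -/
noncomputable def pwc (p : ℕ) (G : Type*) [Group G] : ℕ := sInf {k | etaUp p G k = ⊤}

/-- Iterated commutator `[N, G, G, ..., G]` with `i` copies of `G`. -/
def itComm {G : Type*} [Group G] (N : Subgroup G) : ℕ → Subgroup G
  | 0 => N
  | i + 1 => ⁅itComm N i, (⊤ : Subgroup G)⁆

/-- `N` is PF-embedded in `G`: it admits a potent filtration. -/
def PFEmbedded {G : Type*} [Group G] (p : ℕ) (N : Subgroup G) : Prop :=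
  ∃ (s : ℕ) (M : ℕ → Subgroup G), M 0 = N ∧ M s = ⊥ ∧
    (∀ i, M (i + 1) ≤ M i) ∧ (∀ i, (M i).Normal) ∧
    (∀ i, ⁅M i, (⊤ : Subgroup G)⁆ ≤ M (i + 1)) ∧
    (∀ i, itComm (M i) (p - 1) ≤ pPow p (M (i + 1)))

/-! The Heisenberg group over `ZMod (p ^ 2)` has centre the `c`-coordinate, so its central
quotient is `C_{p²} × C_{p²}`.

Conversely, suppose `P / η` is abelian, where `η = η(P)` and `K = η ^ p`. Then every commutator
lies in `η`, hence is central modulo `K`, so `[x ^ p, g] ≡ [x, g] ^ p ≡ 1` modulo `K`. Thus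
`M = η P ^ p` satisfies `[M, P] ≤ K ≤ M ^ p`, and maximality of `η` gives `P ^ p ≤ η`:
an abelian `P / η` has exponent dividing `p`, whereas `C_{p²} × C_{p²}` has exponent `p²`. -/

open scoped commutatorElement

/-- The Heisenberg group of upper unitriangular `3 × 3` matrices over `R`, the matrix
`[[1, a, c], [0, 1, b], [0, 0, 1]]` being stored as `⟨a, b, c⟩`. -/
@[ext]
structure Heisenberg (R : Type*) where
  a : R
  b : R
  c : R

namespace Heisenberg

variable {R : Type*} [CommRing R]

instance : Mul (Heisenberg R) := ⟨fun x y => ⟨x.a + y.a, x.b + y.b, x.c + y.c + x.a * y.b⟩⟩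
instance : One (Heisenberg R) := ⟨⟨0, 0, 0⟩⟩
instance : Inv (Heisenberg R) := ⟨fun x => ⟨-x.a, -x.b, x.a * x.b - x.c⟩⟩

@[simp] lemma mul_a (x y : Heisenberg R) : (x * y).a = x.a + y.a := rfl
@[simp] lemma mul_b (x y : Heisenberg R) : (x * y).b = x.b + y.b := rfl
@[simp] lemma mul_c (x y : Heisenberg R) : (x * y).c = x.c + y.c + x.a * y.b := rfl
@[simp] lemma one_a : (1 : Heisenberg R).a = 0 := rfl
@[simp] lemma one_b : (1 : Heisenberg R).b = 0 := rfl
@[simp] lemma one_c : (1 : Heisenberg R).c = 0 := rfl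
@[simp] lemma inv_a (x : Heisenberg R) : x⁻¹.a = -x.a := rfl
@[simp] lemma inv_b (x : Heisenberg R) : x⁻¹.b = -x.b := rfl
@[simp] lemma inv_c (x : Heisenberg R) : x⁻¹.c = x.a * x.b - x.c := rfl

instance : Group (Heisenberg R) :=
  Group.ofLeftAxioms (fun _ _ _ => by ext <;> simp only [mul_a, mul_b, mul_c] <;> ring)
    (fun _ => by ext <;> simp) (fun _ => by ext <;> simp)

def proj : Heisenberg R →* Multiplicative (R × R) where
  toFun x := .ofAdd (x.a, x.b)
  map_one' := rfl
  map_mul' _ _ := rfl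

lemma proj_surjective : Function.Surjective (proj (R := R)) :=
  fun z => ⟨⟨z.toAdd.1, z.toAdd.2, 0⟩, rfl⟩

lemma mem_center_iff {x : Heisenberg R} :
    x ∈ Subgroup.center (Heisenberg R) ↔ x.a = 0 ∧ x.b = 0 := by
  rw [Subgroup.mem_center_iff]
  refine ⟨fun h => ⟨?_, ?_⟩, fun ⟨ha, hb⟩ g => ?_⟩
  · simpa using congrArg c (h ⟨0, 1, 0⟩)
  · simpa using (congrArg c (h ⟨1, 0, 0⟩)).symm
  · ext <;> simp [ha, hb, add_comm]

lemma center_eq_ker_proj : Subgroup.center (Heisenberg R) = (proj (R := R)).ker := by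
  ext x
  rw [mem_center_iff, MonoidHom.mem_ker]
  exact ⟨fun ⟨ha, hb⟩ => by simp [proj, ha, hb],
    fun h => Prod.ext_iff.mp (congrArg Multiplicative.toAdd h)⟩

noncomputable def quotientCenterEquiv :
    (Heisenberg R ⧸ Subgroup.center (Heisenberg R)) ≃* Multiplicative (R × R) :=
  (QuotientGroup.quotientMulEquivOfEq center_eq_ker_proj).trans
    (QuotientGroup.quotientKerEquivOfSurjective (proj (R := R)) proj_surjective)

end Heisenberg

section Commutators

variable {G : Type*} [Group G]

lemma commutatorElement_pow_left_of_commute {x g : G} (h : Commute x ⁅x, g⁆) :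
    ∀ n : ℕ, ⁅x ^ n, g⁆ = ⁅x, g⁆ ^ n
  | 0 => by simp
  | n + 1 => by
    have hn := commutatorElement_pow_left_of_commute h n
    calc ⁅x ^ (n + 1), g⁆ = x * ⁅x ^ n, g⁆ * x⁻¹ * ⁅x, g⁆ := by
          simp only [commutatorElement_def]; group
      _ = ⁅x, g⁆ ^ (n + 1) := by
          rw [hn, (h.pow_right n).eq, mul_inv_cancel_right, pow_succ]

lemma commutator_top_le_iff {H K : Subgroup G} [K.Normal] :
    ⁅H, ⊤⁆ ≤ K ↔ H ≤ Subgroup.upperCentralSeriesStep K := by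
  rw [Subgroup.commutator_le]
  simp [SetLike.le_def, Subgroup.mem_upperCentralSeriesStep]

end Commutators

section Eta

variable {p : ℕ} {G : Type*} [Group G]

lemma pPow_mono {N M : Subgroup G} (h : N ≤ M) : pPow p N ≤ pPow p M :=
  Subgroup.closure_mono (Set.image_mono h)

lemma pow_mem_pPow {N : Subgroup G} {x : G} (hx : x ∈ N) : x ^ p ∈ pPow p N :=
  Subgroup.subset_closure ⟨x, hx, rfl⟩

lemma etaUp_one_eq_sSup :
    etaUp p G 1 = sSup {N : Subgroup G | N.Normal ∧ ⁅N, ⊤⁆ ≤ pPow p N} := by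
  simp [etaUp]

lemma le_etaUp_one {N : Subgroup G} [N.Normal] (h : ⁅N, ⊤⁆ ≤ pPow p N) :
    N ≤ etaUp p G 1 :=
  etaUp_one_eq_sSup (p := p) (G := G) ▸ le_sSup ⟨inferInstance, h⟩

lemma commutator_etaUp_one_le : ⁅etaUp p G 1, ⊤⁆ ≤ pPow p (etaUp p G 1) := by
  have : (pPow p (etaUp p G 1)).Normal := pPow_normal p (etaUp_normal p G 1)
  rw [commutator_top_le_iff]
  conv_lhs => rw [etaUp_one_eq_sSup]
  refine sSup_le ?_
  rintro N ⟨_, hN⟩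
  exact commutator_top_le_iff.mp (hN.trans (pPow_mono (le_etaUp_one hN)))

lemma pPow_top_le_etaUp_one (h : commutator G ≤ etaUp p G 1) :
    pPow p ⊤ ≤ etaUp p G 1 := by
  set η := etaUp p G 1
  set K := pPow p η
  have : K.Normal := pPow_normal p (etaUp_normal p G 1)
  have hηK : η ≤ Subgroup.upperCentralSeriesStep K :=
    commutator_top_le_iff.mp commutator_etaUp_one_le
  have hpow : pPow p ⊤ ≤ Subgroup.upperCentralSeriesStep K := by
    refine Subgroup.closure_le _ |>.mpr ?_
    rintro - ⟨x, -, rfl⟩ g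
    have hxg : ⁅x, g⁆ ∈ η := h (Subgroup.commutator_mem_commutator trivial trivial)
    have hcentral : ⁅(x : G ⧸ K), (g : G ⧸ K)⁆ ∈ Subgroup.center (G ⧸ K) := by
      simpa [Subgroup.upperCentralSeriesStep_eq_comap_center] using hηK hxg
    have hcomm : Commute (x : G ⧸ K) ⁅(x : G ⧸ K), (g : G ⧸ K)⁆ :=
      Subgroup.mem_center_iff.mp hcentral x
    have hmod : ((⁅x ^ p, g⁆ : G) : G ⧸ K) = ((⁅x, g⁆ ^ p : G) : G ⧸ K) := by
      simpa [commutatorElement_def] using commutatorElement_pow_left_of_commute hcomm p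
    rw [← QuotientGroup.eq_one_iff, hmod, QuotientGroup.eq_one_iff]
    exact pow_mem_pPow hxg
  have : (pPow p (⊤ : Subgroup G)).Normal := pPow_normal p inferInstance
  refine le_sup_right.trans (le_etaUp_one (N := η ⊔ pPow p ⊤) ?_)
  exact (commutator_top_le_iff.mpr (sup_le hηK hpow)).trans (pPow_mono le_sup_left)

end Eta

lemma commutator_le_of_quotient_mulEquiv {G A : Type*} [Group G] [CommGroup A] {N : Subgroup G}
    [N.Normal] (e : G ⧸ N ≃* A) : commutator G ≤ N := by
  refine (Abelianization.commutator_subset_ker (e.toMonoidHom.comp (QuotientGroup.mk' N))).trans ?_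
  intro x hx
  rw [MonoidHom.mem_ker, MonoidHom.comp_apply, MulEquiv.coe_toMonoidHom,
    map_eq_one_iff _ e.injective, QuotientGroup.mk'_apply, QuotientGroup.eq_one_iff] at hx
  exact hx

lemma exponent_quotient_dvd_of_pPow_top_le {G : Type*} [Group G] {p : ℕ} {N : Subgroup G}
    [N.Normal] (h : pPow p ⊤ ≤ N) : Monoid.exponent (G ⧸ N) ∣ p := by
  refine Monoid.exponent_dvd_of_forall_pow_eq_one fun q => ?_
  induction q using QuotientGroup.induction_on with
  | H x => exact (QuotientGroup.eq_one_iff _).mpr (h (pow_mem_pPow (Subgroup.mem_top x)))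

lemma exponent_multiplicative_zmod_prod (n : ℕ) :
    Monoid.exponent (Multiplicative (ZMod n × ZMod n)) = n := by
  rw [Monoid.exponent_multiplicative, AddMonoid.exponent_prod, ZMod.exponent, lcm_same,
    normalize_eq]

theorem Cp2xCp2_capable_not_eta_capable_general {p : ℕ} (hp : p.Prime) :
    (∃ (Q : Type) (_ : Group Q),
        Nonempty ((Q ⧸ Subgroup.center Q) ≃*
          Multiplicative (ZMod (p ^ 2) × ZMod (p ^ 2)))) ∧
      ¬ ∃ (P : Type) (_ : Group P), Finite P ∧ IsPGroup p P ∧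
          Nonempty ((P ⧸ etaUp p P 1) ≃*
            Multiplicative (ZMod (p ^ 2) × ZMod (p ^ 2))) := by
  refine ⟨⟨Heisenberg (ZMod (p ^ 2)), _, ⟨Heisenberg.quotientCenterEquiv⟩⟩, ?_⟩
  rintro ⟨P, _, -, -, ⟨e⟩⟩
  have hdvd : p ^ 2 ∣ p := by
    rw [← exponent_multiplicative_zmod_prod (p ^ 2), ← Monoid.exponent_eq_of_mulEquiv e]
    exact exponent_quotient_dvd_of_pPow_top_le
      (pPow_top_le_etaUp_one (commutator_le_of_quotient_mulEquiv e))
  exact (Nat.le_of_dvd hp.pos hdvd).not_gt (lt_self_pow₀ hp.one_lt one_lt_two)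

/-- `C_{p²} × C_{p²}` is capable but not η-capable. -/
theorem Cp2xCp2_capable_not_eta_capable {p : ℕ} (hp : p.Prime) (hodd : Odd p) :
    (∃ (Q : Type) (_ : Group Q),
        Nonempty ((Q ⧸ Subgroup.center Q) ≃*
          Multiplicative (ZMod (p ^ 2) × ZMod (p ^ 2)))) ∧
      ¬ ∃ (P : Type) (_ : Group P), Finite P ∧ IsPGroup p P ∧
          Nonempty ((P ⧸ etaUp p P 1) ≃*
            Multiplicative (ZMod (p ^ 2) × ZMod (p ^ 2))) :=
  Cp2xCp2_capable_not_eta_capable_general hp
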